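/- arXiv:1205.0797 — 3 statements merged into one kernel-verified Lean document; each statement's English description precedes it below -/
import Mathlib

section
/- For the subspaces u_{n,i} = Σ_{j=i}^{n} P_{j-1}∂ⱼ of the Lie algebra u_n, it holds that [u_{n,i}, u_{n,j}] ⊆ u_{n,j} whenever i < j. -/
open MvPolynomial

noncomputable section

/-- The polynomial algebra `Pₙ = K[x₀,…,x_{n-1}]`. -/
abbrev Pn (K : Type) [Field K] (n : ℕ) : Type := MvPolynomial (Fin n) K

/-- The Lie algebra of `K`-derivations of `Pₙ`. -/
abbrev DerPn (K : Type) [Field K] (n : ℕ) : Type :=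
  Derivation K (Pn K n) (Pn K n)

/-- The subalgebra `P_j = K[x₀,…,x_{j-1}]` of `Pₙ` (0-indexed: variables with index `< j`). -/
def Psub (K : Type) [Field K] (n j : ℕ) : Subalgebra K (Pn K n) :=
  MvPolynomial.supported K {k : Fin n | (k : ℕ) < j}

/-- The subspace `u_{n,i} = Σ_{j=i}^n P_{j-1}∂_j` (1-indexed `i`; `U K n 1 = u_n`).
A derivation `D` lies in it iff `D(x_j) ∈ P_{j-1}` for all `j` and `D(x_j) = 0` for `j < i`
(0-indexed: `D (X j) = 0` when `(j:ℕ)+1 < i`). -/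
def U (K : Type) [Field K] (n i : ℕ) : Submodule K (DerPn K n) where
  carrier := {D | ∀ j : Fin n, D (X j) ∈ Psub K n j ∧ ((j : ℕ) + 1 < i → D (X j) = 0)}
  add_mem' := by
    intro a b ha hb j
    refine ⟨?_, fun h => ?_⟩
    · simpa using Subalgebra.add_mem _ (ha j).1 (hb j).1
    · simp [(ha j).2 h, (hb j).2 h]
  zero_mem' := by
    intro j
    refine ⟨by simpa using (Psub K n j).zero_mem, fun _ => rfl⟩
  smul_mem' := by
    intro c a ha j
    refine ⟨?_, fun h => ?_⟩
    · simpa using Subalgebra.smul_mem _ (ha j).1 c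
    · simp [(ha j).2 h]

/-- The span of all brackets `⁅a,b⁆` with `a ∈ A`, `b ∈ B`. -/
def lieSpan (K : Type) [Field K] (n : ℕ) (A B : Submodule K (DerPn K n)) :
    Submodule K (DerPn K n) :=
  Submodule.span K {x | ∃ a ∈ A, ∃ b ∈ B, x = ⁅a, b⁆}

/-- The derived series of a subspace `G`: `G_{(0)} = G`, `G_{(i+1)} = [G_{(i)}, G_{(i)}]`. -/
def derivedSub (K : Type) [Field K] (n : ℕ) (G : Submodule K (DerPn K n)) : ℕ → Submodule K (DerPn K n)
  | 0 => G
  | i + 1 => lieSpan K n (derivedSub K n G i) (derivedSub K n G i)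

/-! Every `a ∈ u_n` maps each `P_k` into itself and every `b ∈ u_{n,j}` kills `P_{j-1}`. Hence
`[a, b](x_k) = a(b x_k) - b(a x_k)` lies in `P_{k-1}`, and for `k < j` both terms vanish since
`b x_k = 0` and `a x_k ∈ P_{k-1} ⊆ P_{j-1}`. -/

theorem Derivation.map_mem_adjoin {R A : Type*} [CommSemiring R] [CommSemiring A] [Algebra R A]
    (D : Derivation R A A) {s : Set A} (hs : ∀ x ∈ s, D x ∈ Algebra.adjoin R s)
    {x : A} (hx : x ∈ Algebra.adjoin R s) : D x ∈ Algebra.adjoin R s := by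
  induction hx using Algebra.adjoin_induction with
  | mem x hx => exact hs x hx
  | algebraMap r => simp
  | add x y _ _ hx hy => rw [map_add]; exact add_mem hx hy
  | mul x y hx' hy' hx hy =>
    rw [Derivation.leibniz, smul_eq_mul, smul_eq_mul]
    exact add_mem (mul_mem hx' hy) (mul_mem hy' hx)

theorem MvPolynomial.derivation_map_mem_supported {R σ : Type*} [CommSemiring R]
    (D : Derivation R (MvPolynomial σ R) (MvPolynomial σ R)) {s : Set σ}
    (hs : ∀ i ∈ s, D (X i) ∈ supported R s) {p : MvPolynomial σ R} (hp : p ∈ supported R s) :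
    D p ∈ supported R s :=
  D.map_mem_adjoin (Set.forall_mem_image.2 hs) hp

theorem MvPolynomial.derivation_eq_zero_of_mem_supported {R σ : Type*} [CommSemiring R]
    {D : Derivation R (MvPolynomial σ R) (MvPolynomial σ R)} {s : Set σ}
    (hs : ∀ i ∈ s, D (X i) = 0) {p : MvPolynomial σ R} (hp : p ∈ supported R s) : D p = 0 :=
  derivation_eq_zero_of_forall_mem_vars fun i hi => hs i ((mem_supported.1 hp) hi)

section U

variable {K : Type} [Field K] {n : ℕ}

theorem Psub_mono {a b : ℕ} (h : a ≤ b) : Psub K n a ≤ Psub K n b :=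
  supported_mono fun _ hk => lt_of_lt_of_le hk h

theorem map_mem_Psub_of_mem_U {i : ℕ} {D : DerPn K n} (hD : D ∈ U K n i) (k : ℕ)
    {p : Pn K n} (hp : p ∈ Psub K n k) : D p ∈ Psub K n k :=
  derivation_map_mem_supported D (fun l hl => Psub_mono (le_of_lt hl) (hD l).1) hp

theorem apply_eq_zero_of_mem_U {j k : ℕ} (hkj : k < j) {D : DerPn K n} (hD : D ∈ U K n j)
    {p : Pn K n} (hp : p ∈ Psub K n k) : D p = 0 :=
  derivation_eq_zero_of_mem_supported
    (fun (l : Fin n) (hl : (l : ℕ) < k) => (hD l).2 (by omega)) hp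

theorem lie_mem_U {i j : ℕ} {a b : DerPn K n} (ha : a ∈ U K n i) (hb : b ∈ U K n j) :
    ⁅a, b⁆ ∈ U K n j := by
  intro k
  rw [Derivation.commutator_apply]
  refine ⟨sub_mem (map_mem_Psub_of_mem_U ha k (hb k).1) (map_mem_Psub_of_mem_U hb k (ha k).1),
    fun hk => ?_⟩
  rw [(hb k).2 hk, map_zero, apply_eq_zero_of_mem_U (by omega) hb (ha k).1, sub_zero]

end U

theorem bracket_U_lt_general (K : Type) [Field K] (n : ℕ)
    (i j : ℕ) :
    lieSpan K n (U K n i) (U K n j) ≤ U K n j := by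
  rw [lieSpan, Submodule.span_le]
  rintro _ ⟨a, ha, b, hb, rfl⟩
  exact lie_mem_U ha hb

/-- `[u_{n,i}, u_{n,j}] ⊆ u_{n,j}` whenever `i < j`. -/
theorem bracket_U_lt (K : Type) [Field K] [CharZero K] (n : ℕ) (hn : 2 ≤ n)
    (i j : ℕ) (h1 : 1 ≤ i) (hij : i < j) (hj : j ≤ n) :
    lieSpan K n (U K n i) (U K n j) ≤ U K n j :=
  bracket_U_lt_general K n i j
end
end

section
/- If φ : u_n → u_n is an injective Lie algebra homomorphism, then φ(∂₁) = λ∂₁ + u for some λ ∈ K* and u ∈ u_{n,2}; i.e., the image of u_n under φ is not contained in the derived subalgebra u_{n,2} = [u_n, u_n]. -/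
/-!
Elements of `U i` preserve every `P_j` and annihilate `P_j` for `j < i`, so
`⁅U i, U i⁆ ⊆ U (i + 1)`; as `U (n + 1) = 0`, the `(n - 1)`-st derived algebra of
`u_{n,2} = U 2` vanishes. On the other hand, `f ∂_j = ⁅∂_k, g ∂_j⁆` with `∂_k g = f` shows that
`f ∂_j` (for `f ∈ P_j`) lies in the `k`-th derived algebra of `u_n` for every `k ≤ j`; in
particular `∂_{n-1}` survives to step `n - 1`, and `U 2 = [u_n, u_n]`.
Every element of `u_n` is `c ∂₀ + w` with `w ∈ U 2`. If `φ ∂₀ ∈ U 2`, then, as `φ` preserves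
`[u_n, u_n]`, `φ u_n ⊆ U 2`, so `φ` kills the `(n - 1)`-st derived algebra of `u_n`, which
contains `∂_{n-1} ≠ 0`: impossible for an injective `φ`. (Variables are indexed from `0`.)
-/

open MvPolynomial

noncomputable section

open LieAlgebra

theorem Derivation.apply_mem_adjoin {R A : Type*} [CommSemiring R] [CommSemiring A] [Algebra R A]
    (D : Derivation R A A) {s : Set A} (h : ∀ a ∈ s, D a ∈ Algebra.adjoin R s) {x : A}
    (hx : x ∈ Algebra.adjoin R s) : D x ∈ Algebra.adjoin R s := by
  induction hx using Algebra.adjoin_induction with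
  | mem x hx => exact h x hx
  | algebraMap r => simp
  | add x y _ _ hx hy => simpa using add_mem hx hy
  | mul x y hx' hy' hx hy =>
    rw [Derivation.leibniz, smul_eq_mul, smul_eq_mul]
    exact add_mem (mul_mem hx' hy) (mul_mem hy' hx)

namespace MvPolynomial

variable {σ R : Type*} [CommRing R]

theorem lie_pderiv_smul_pderiv (a b : σ) (f : MvPolynomial σ R) :
    ⁅(pderiv a : Derivation R (MvPolynomial σ R) (MvPolynomial σ R)), f • pderiv (R := R) b⁆ =
      pderiv a f • pderiv b := by
  classical
  refine derivation_ext fun j => ?_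
  simp only [Derivation.commutator_apply, Derivation.smul_apply, smul_eq_mul, pderiv_X,
    Pi.single_apply]
  split_ifs <;> simp

theorem derivation_eq_sum_smul_pderiv [Fintype σ]
    (D : Derivation R (MvPolynomial σ R) (MvPolynomial σ R)) :
    D = ∑ j, D (X j) • pderiv j := by
  classical
  refine derivation_ext fun j => ?_
  have hsum := congrFun (map_sum Derivation.coeFnAddMonoidHom
    (fun j => D (X j) • pderiv (R := R) j) Finset.univ) (X j)
  simp only [Derivation.coeFnAddMonoidHom_apply, Finset.sum_apply] at hsum
  simp [hsum, pderiv_X, Pi.single_apply]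

theorem monomial_mem_supported {s : Set σ} {d : σ →₀ ℕ} (hd : ↑d.support ⊆ s) (c : R) :
    monomial d c ∈ supported R s := by
  classical
  by_cases hc : c = 0
  · simp [hc]
  · rwa [mem_supported, vars_monomial hc]

theorem exists_pderiv_eq_of_mem_supported {K : Type*} [Field K] [CharZero K] {s : Set σ} {k : σ}
    (hk : k ∈ s) {p : MvPolynomial σ K} (hp : p ∈ supported K s) :
    ∃ q ∈ supported K s, pderiv k q = p := by
  classical
  refine ⟨∑ m ∈ p.support, monomial (m + Finsupp.single k 1) (coeff m p / (m k + 1)), ?_, ?_⟩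
  · refine Subalgebra.sum_mem _ fun m hm => monomial_mem_supported (fun a ha => ?_) _
    rcases Finset.mem_union.mp (Finsupp.support_add ha) with ha | ha
    · exact mem_supported.mp hp (support_subset_vars_of_mem_support hm ha)
    · rwa [Finset.mem_singleton.mp (Finsupp.support_single_subset ha)]
  · conv_rhs => rw [p.as_sum]
    refine (map_sum _ _ _).trans (Finset.sum_congr rfl fun m _ => ?_)
    rw [pderiv_monomial, add_tsub_cancel_right]
    congr 1
    simp only [Finsupp.add_apply, Finsupp.single_eq_same]
    push_cast
    exact div_mul_cancel₀ _ (Nat.cast_add_one_ne_zero (m k))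

end MvPolynomial

variable {K : Type} [Field K] {n : ℕ}

theorem Psub_zero : Psub K n 0 = ⊥ := by
  rw [Psub, show {k : Fin n | (k : ℕ) < 0} = ∅ by ext; simp, supported_empty]

theorem Psub_mono_s7 : Monotone (Psub K n) :=
  fun _ _ h => supported_mono fun _ hk => lt_of_lt_of_le hk h

theorem U_antitone : Antitone (U K n) :=
  fun _ _ h _ hD j => ⟨(hD j).1, fun hj => (hD j).2 (by omega)⟩

theorem mem_U_two_iff {D : DerPn K n} :
    D ∈ U K n 2 ↔ D ∈ U K n 1 ∧ ∀ j : Fin n, (j : ℕ) = 0 → D (X j) = 0 :=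
  ⟨fun h => ⟨U_antitone one_le_two h, fun j hj => (h j).2 (by omega)⟩,
    fun ⟨h1, h0⟩ j => ⟨(h1 j).1, fun hj => h0 j (by omega)⟩⟩

theorem U_eq_bot : U K n (n + 1) = ⊥ :=
  eq_bot_iff.2 fun _ hD => derivation_ext fun j => (hD j).2 (by omega)

theorem lie_mem_U_succ {i : ℕ} {a b : DerPn K n} (ha : a ∈ U K n i) (hb : b ∈ U K n i) :
    ⁅a, b⁆ ∈ U K n (i + 1) := by
  intro j
  have hP : ∀ c ∈ U K n i, ∀ p ∈ Psub K n j, c p ∈ Psub K n j := by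
    rintro c hc p hp
    refine c.apply_mem_adjoin ?_ hp
    rintro _ ⟨m, hm, rfl⟩
    exact Psub_mono_s7 hm.le (hc m).1
  have hZ : (j : ℕ) < i → ∀ c ∈ U K n i, ∀ p ∈ Psub K n j, c p = 0 :=
    fun hj c hc p hp => derivation_eqOn_supported (D₂ := 0)
      (fun (m : Fin n) (hm : (m : ℕ) < j) => (hc m).2 (by omega)) hp
  refine ⟨sub_mem (hP a ha _ (hb j).1) (hP b hb _ (ha j).1), fun hj => ?_⟩
  rw [Derivation.commutator_apply, hZ (by omega) a ha _ (hb j).1,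
    hZ (by omega) b hb _ (ha j).1, sub_zero]

theorem apply_mem_U_of_mem_derivedSeries {M : Type*} [LieRing M] [LieAlgebra K M]
    (f : M →ₗ⁅K⁆ DerPn K n) {i : ℕ} (hf : ∀ x, f x ∈ U K n i) :
    ∀ (k : ℕ) {x : M}, x ∈ derivedSeries K M k → f x ∈ U K n (i + k)
  | 0, x, _ => hf x
  | k + 1, x, hx => by
    rw [derivedSeries_def, derivedSeriesOfIdeal_succ, ← LieSubmodule.mem_toSubmodule,
      LieSubmodule.lieIdeal_oper_eq_linear_span'] at hx
    suffices h : Submodule.span K {⁅a, b⁆ | (a ∈ derivedSeries K M k) (b ∈ derivedSeries K M k)}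
        ≤ (U K n (i + (k + 1))).comap (f : M →ₗ[K] DerPn K n) from h hx
    rw [Submodule.span_le]
    rintro _ ⟨a, ha, b, hb, rfl⟩
    rw [SetLike.mem_coe, Submodule.mem_comap, LieHom.coe_toLinearMap, LieHom.map_lie]
    exact lie_mem_U_succ (apply_mem_U_of_mem_derivedSeries f hf k ha)
      (apply_mem_U_of_mem_derivedSeries f hf k hb)

theorem apply_eq_zero_of_mem_derivedSeries {M : Type*} [LieRing M] [LieAlgebra K M]
    (f : M →ₗ⁅K⁆ DerPn K n) (hf : ∀ x, f x ∈ U K n 2) {x : M}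
    (hx : x ∈ derivedSeries K M (n - 1)) : f x = 0 := by
  have h := U_antitone (show n + 1 ≤ 2 + (n - 1) by omega)
    (apply_mem_U_of_mem_derivedSeries f hf (n - 1) hx)
  rwa [U_eq_bot, Submodule.mem_bot] at h

theorem smul_pderiv_mem_U_one {j : Fin n} {f : Pn K n} (hf : f ∈ Psub K n j) :
    f • (pderiv j : DerPn K n) ∈ U K n 1 := by
  classical
  refine fun m => ⟨?_, by omega⟩
  simp only [Derivation.smul_apply, smul_eq_mul, pderiv_X, Pi.single_apply]
  split_ifs with hmj
  · subst hmj; simpa using hf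
  · simp

theorem exists_eq_smul_pderiv_add_of_mem_U_one {x : DerPn K n} (hx : x ∈ U K n 1) {i : Fin n}
    (hi : (i : ℕ) = 0) : ∃ c : K, ∃ w ∈ U K n 2, x = c • pderiv i + w := by
  have hxi : x (X i) ∈ Psub K n 0 := hi ▸ (hx i).1
  obtain ⟨c, hc⟩ := Algebra.mem_bot.1 (Psub_zero (K := K) (n := n) ▸ hxi)
  have hi1 : (pderiv i : DerPn K n) ∈ U K n 1 := by
    simpa using smul_pderiv_mem_U_one (one_mem (Psub K n i))
  refine ⟨c, x - c • pderiv i, mem_U_two_iff.2 ⟨sub_mem hx (Submodule.smul_mem _ c hi1), ?_⟩,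
    by abel⟩
  intro j hj
  obtain rfl : j = i := Fin.ext (hj.trans hi.symm)
  simp [← hc, smul_eq_C_mul]

section LieSubalgebra

variable [CharZero K] {L : LieSubalgebra K (DerPn K n)}

theorem smul_pderiv_mem_map_derivedSeries (hL : U K n 1 ≤ L.toSubmodule) :
    ∀ {k : ℕ} {j : Fin n}, k ≤ j → ∀ {f : Pn K n}, f ∈ Psub K n j →
      f • (pderiv j : DerPn K n) ∈
        (derivedSeries K L k : Submodule K L).map (L.incl : L →ₗ[K] DerPn K n)
  | 0, j, _, f, hf => ⟨⟨_, hL (smul_pderiv_mem_U_one hf)⟩, by simp, rfl⟩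
  | k + 1, j, hkj, f, hf => by
    set a : Fin n := ⟨k, by omega⟩
    obtain ⟨y, hy, hya⟩ :=
      smul_pderiv_mem_map_derivedSeries hL (k := k) (j := a) le_rfl (one_mem _)
    obtain ⟨g, hg, rfl⟩ := exists_pderiv_eq_of_mem_supported (k := a)
      (show (k : ℕ) < j by omega) hf
    obtain ⟨z, hz, hzg⟩ := smul_pderiv_mem_map_derivedSeries hL (k := k) (j := j) (by omega) hg
    have hyz : ⁅y, z⁆ ∈ derivedSeries K L (k + 1) := by
      rw [derivedSeries_def, derivedSeriesOfIdeal_succ]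
      exact LieSubmodule.lie_mem_lie hy hz
    refine ⟨⁅y, z⁆, hyz, ?_⟩
    simp only [LieHom.coe_toLinearMap, LieSubalgebra.coe_incl, one_smul] at hya hzg ⊢
    rw [LieSubalgebra.coe_bracket, hya, hzg, lie_pderiv_smul_pderiv]

theorem mem_map_derivedSeries_one_of_mem_U_two (hL : U K n 1 ≤ L.toSubmodule) {w : DerPn K n}
    (hw : w ∈ U K n 2) :
    w ∈ (derivedSeries K L 1 : Submodule K L).map (L.incl : L →ₗ[K] DerPn K n) := by
  rw [derivation_eq_sum_smul_pderiv w]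
  refine Submodule.sum_mem _ fun j _ => ?_
  rcases Nat.eq_zero_or_pos j with hj | hj
  · rw [(hw j).2 (by omega), zero_smul]
    exact zero_mem _
  · exact smul_pderiv_mem_map_derivedSeries hL hj (hw j).1

theorem exists_ne_zero_mem_derivedSeries (hL : U K n 1 ≤ L.toSubmodule) (hn : 0 < n) :
    ∃ y ∈ derivedSeries K L (n - 1), y ≠ 0 := by
  set last : Fin n := ⟨n - 1, by omega⟩
  obtain ⟨y, hy, hy_eq⟩ :=
    smul_pderiv_mem_map_derivedSeries hL (j := last) le_rfl (one_mem (Psub K n last))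
  refine ⟨y, hy, fun h => one_ne_zero (α := Pn K n) ?_⟩
  simp only [h, map_zero, one_smul] at hy_eq
  rw [← pderiv_X_self last, ← hy_eq, Derivation.zero_apply]

theorem apply_mem_U_two_of_apply_pderiv_mem_U_two (hL : L.toSubmodule = U K n 1)
    (φ : L →ₗ⁅K⁆ L) {i : Fin n} (hi : (i : ℕ) = 0) {d : L} (hd : (d : DerPn K n) = pderiv i)
    (hφd : (φ d : DerPn K n) ∈ U K n 2) (x : L) : (φ x : DerPn K n) ∈ U K n 2 := by
  have hLU : ∀ y : L, (y : DerPn K n) ∈ U K n 1 := fun y => hL ▸ y.2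
  obtain ⟨c, w, hw, hx⟩ := exists_eq_smul_pderiv_add_of_mem_U_one (hLU x) hi
  obtain ⟨y, hy, rfl⟩ := Submodule.mem_map.1 (mem_map_derivedSeries_one_of_mem_U_two hL.ge hw)
  have hx' : x = c • d + y := Subtype.ext (by simp [hx, hd])
  have hφy : φ y ∈ derivedSeries K L 1 :=
    LieIdeal.derivedSeries_map_le (f := φ) 1 (LieIdeal.mem_map hy)
  rw [hx', map_add, map_smul]
  exact add_mem (Submodule.smul_mem _ c hφd)
    (apply_mem_U_of_mem_derivedSeries L.incl hLU 1 hφy)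

end LieSubalgebra

theorem phi_d1_general (K : Type) [Field K] [CharZero K] (n : ℕ)
    (L : LieSubalgebra K (DerPn K n)) (hL : L.toSubmodule = U K n 1)
    (φ : L →ₗ⁅K⁆ L) (hφ : Function.Injective φ)
    (i : Fin n) (hi : (i : ℕ) = 0) (d : L) (hd : (d : DerPn K n) = pderiv i) :
    ∃ lam : K, lam ≠ 0 ∧ ∃ u : DerPn K n, u ∈ U K n 2 ∧
      ((φ d : L) : DerPn K n) = lam • pderiv i + u := by
  obtain ⟨c, w, hw, hφd⟩ :=
    exists_eq_smul_pderiv_add_of_mem_U_one (hL ▸ (φ d).2 : (φ d : DerPn K n) ∈ U K n 1) hi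
  refine ⟨c, fun hc => ?_, w, hw, hφd⟩
  rw [hc, zero_smul, zero_add] at hφd
  have hφU : ∀ x, L.incl (φ x) ∈ U K n 2 :=
    apply_mem_U_two_of_apply_pderiv_mem_U_two hL φ hi hd (hφd ▸ hw)
  obtain ⟨y, hy, hy0⟩ := exists_ne_zero_mem_derivedSeries hL.ge i.pos
  have hφy : L.incl.comp φ y = 0 := apply_eq_zero_of_mem_derivedSeries (L.incl.comp φ) hφU hy
  exact hy0 (hφ (by simpa using hφy))

/-- if `φ : u_n → u_n` is an injective Lie algebra homomorphism then
`φ(∂₁) = λ∂₁ + u` for some `λ ∈ K*` and `u ∈ u_{n,2}`. -/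
theorem phi_d1 (K : Type) [Field K] [CharZero K] (n : ℕ) (hn : 2 ≤ n)
    (L : LieSubalgebra K (DerPn K n)) (hL : L.toSubmodule = U K n 1)
    (φ : L →ₗ⁅K⁆ L) (hφ : Function.Injective φ)
    (i : Fin n) (hi : (i : ℕ) = 0) (d : L) (hd : (d : DerPn K n) = pderiv i) :
    ∃ lam : K, lam ≠ 0 ∧ ∃ u : DerPn K n, u ∈ U K n 2 ∧
      ((φ d : L) : DerPn K n) = lam • pderiv i + u :=
  phi_d1_general K n L hL φ hφ i hi d hd
end
end

section
/- Let φ : u_n → u_n be an injective Lie algebra homomorphism with φ(∂ⱼ) = ∂ⱼ for j = 1,...,n−1. Then φ(Nᵢ) ⊆ Nᵢ for all i ≥ 0, where Nᵢ = {u ∈ u_n | ad(∂ⱼ)^{i+1}(u) = 0 for j = 1,...,n−1}; and since each Nᵢ is finite-dimensional and φ injective, φ(Nᵢ) = Nᵢ, hence φ is bijective. -/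
open MvPolynomial

noncomputable section

/-- `Nᵢ = {u ∈ u_n | ad(∂ⱼ)^{i+1}(u) = 0 for j = 1,…,n-1}` (0-indexed `j < n-1`). -/
def Nset (K : Type) [Field K] (n i : ℕ) : Set (DerPn K n) :=
  {u | u ∈ U K n 1 ∧ ∀ j : Fin n, (j : ℕ) < n - 1 →
    (fun v : DerPn K n => ⁅(pderiv j : DerPn K n), v⁆)^[i + 1] u = 0}

/-!
Since `φ` fixes `∂ⱼ`, it commutes with `ad ∂ⱼ` and so preserves every `Nᵢ`. For `u ∈ u_n` we have
`((ad ∂ⱼ)^m u)(xₖ) = ∂ⱼ^m (u xₖ)`, so in characteristic zero `u ∈ Nᵢ` says that each `u(xₖ)` has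
degree at most `i` in each of `x₁, …, x_{n-1}`; it does not involve `xₙ` since `u(xₖ) ∈ P_{k-1}`.
Hence `Nᵢ` embeds into a finite-dimensional space of polynomials, the injective `φ` restricts to a
bijection of each `Nᵢ`, and the `Nᵢ` exhaust `u_n`.
-/

open LieAlgebra

namespace MvPolynomial

variable {σ R : Type*} [CommRing R]

theorem coeff_pderiv_iterate (i : σ) (s : ℕ) (p : MvPolynomial σ R) (m : σ →₀ ℕ) :
    coeff m ((⇑(pderiv i))^[s] p) =
      coeff (m + Finsupp.single i s) p * ((m i + 1).ascFactorial s : ℕ) := by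
  induction s generalizing p with
  | zero => simp
  | succ s ih =>
    rw [Function.iterate_succ_apply, ih, coeff_pderiv, Nat.ascFactorial_succ, add_assoc,
      ← Finsupp.single_add]
    simp only [Finsupp.add_apply, Finsupp.single_eq_same, Nat.cast_mul, Nat.cast_add, Nat.cast_one]
    ring

theorem pderiv_iterate_eq_zero_of_degreeOf_lt {i : σ} {p : MvPolynomial σ R} {s : ℕ}
    (h : p.degreeOf i < s) : (⇑(pderiv i))^[s] p = 0 := by
  ext m
  rw [coeff_pderiv_iterate, coeff_zero, notMem_support_iff.mp fun hm => ?_, zero_mul]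
  have := monomial_le_degreeOf i hm
  simp only [Finsupp.add_apply, Finsupp.single_eq_same] at this
  omega

theorem pderiv_iterate_succ_eq_zero_iff [NoZeroDivisors R] [CharZero R] {i : σ}
    {p : MvPolynomial σ R} {s : ℕ} :
    (⇑(pderiv i))^[s + 1] p = 0 ↔ p.degreeOf i ≤ s := by
  refine ⟨fun h => degreeOf_le_iff.mpr fun m hm => ?_,
    fun h => pderiv_iterate_eq_zero_of_degreeOf_lt (Nat.lt_succ_of_le h)⟩
  by_contra! hlt
  have hle : Finsupp.single i (s + 1) ≤ m := Finsupp.single_le_iff.mpr hlt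
  have key := coeff_pderiv_iterate i (s + 1) p (m - Finsupp.single i (s + 1))
  rw [h, coeff_zero, tsub_add_cancel_of_le hle, eq_comm, mul_eq_zero, Nat.cast_eq_zero] at key
  exact key.elim (mem_support_iff.mp hm) (Nat.ascFactorial_pos _ _).ne'

theorem ad_pderiv_pow_apply_X (j k : σ) (m : ℕ)
    (u : Derivation R (MvPolynomial σ R) (MvPolynomial σ R)) :
    ((ad R _ (pderiv j) ^ m) u) (X k) = (⇑(pderiv j))^[m] (u (X k)) := by
  induction m with
  | zero => rfl
  | succ m ih =>
    set v := (ad R _ (pderiv j) ^ m) u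
    have hv : v (pderiv j (X k)) = 0 := by
      rcases eq_or_ne k j with rfl | hkj
      · rw [pderiv_X_self, Derivation.map_one_eq_zero]
      · rw [pderiv_X_of_ne hkj, map_zero]
    rw [pow_succ', Module.End.mul_apply, ad_apply, Derivation.commutator_apply, hv, sub_zero, ih,
      Function.iterate_succ_apply']

theorem finite_of_forall_apply_X_mem_restrictDegree [Finite σ] [IsNoetherianRing R]
    (W : Submodule R (Derivation R (MvPolynomial σ R) (MvPolynomial σ R))) (d : ℕ)
    (h : ∀ D ∈ W, ∀ k, D (X k) ∈ restrictDegree σ R d) : Module.Finite R W := by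
  let f : W →ₗ[R] σ → restrictDegree σ R d := LinearMap.pi fun k =>
    LinearMap.codRestrict _
      ((LinearMap.proj k) ∘ₗ (mkDerivationEquiv R).symm.toLinearMap ∘ₗ W.subtype)
      fun D => h D D.2 k
  refine Module.Finite.of_injective f fun D₁ D₂ hD => Subtype.ext <| derivation_ext fun k => ?_
  exact congrArg Subtype.val (congrFun hD k)

end MvPolynomial

theorem LieHom.map_ad_pow {R L L' : Type*} [CommRing R] [LieRing L] [LieAlgebra R L] [LieRing L']
    [LieAlgebra R L'] (f : L →ₗ⁅R⁆ L') (a x : L) (m : ℕ) :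
    f ((ad R L a ^ m) x) = (ad R L' (f a) ^ m) (f x) := by
  induction m with
  | zero => rfl
  | succ m ih =>
    rw [pow_succ', pow_succ', Module.End.mul_apply, Module.End.mul_apply, ad_apply, ad_apply,
      LieHom.map_lie, ih]

theorem LinearMap.surjective_of_injective_of_forall_mem_finite_invariant {K V : Type*}
    [DivisionRing K] [AddCommGroup V] [Module K V] {f : V →ₗ[K] V} (hf : Function.Injective f)
    (h : ∀ y, ∃ W : Submodule K V, FiniteDimensional K W ∧ W ≤ W.comap f ∧ y ∈ W) :
    Function.Surjective f := by
  intro y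
  obtain ⟨W, hW, hWf, hy⟩ := h y
  have hinj : Function.Injective (f.restrict hWf) := fun a b hab =>
    Subtype.ext (hf (congrArg Subtype.val hab))
  obtain ⟨x, hx⟩ := LinearMap.injective_iff_surjective.mp hinj ⟨y, hy⟩
  exact ⟨x, congrArg Subtype.val hx⟩

theorem pderiv_mem_U (K : Type) [Field K] {n : ℕ} (j : Fin n) :
    (pderiv j : DerPn K n) ∈ U K n 1 := by
  intro k
  refine ⟨?_, by omega⟩
  rcases eq_or_ne k j with rfl | hkj
  · rw [pderiv_X_self]
    exact (Psub K n k).one_mem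
  · rw [pderiv_X_of_ne hkj]
    exact (Psub K n k).zero_mem

def Nsub (K : Type) [Field K] (n i : ℕ) : Submodule K (DerPn K n) :=
  U K n 1 ⊓ ⨅ (j : Fin n) (_ : (j : ℕ) < n - 1), LinearMap.ker (ad K _ (pderiv j) ^ (i + 1))

section Nsub

variable {K : Type} [Field K] {n i : ℕ}

theorem mem_Nsub_iff {u : DerPn K n} : u ∈ Nsub K n i ↔ u ∈ Nset K n i := by
  simp only [Nsub, Nset, Submodule.mem_inf, Submodule.mem_iInf, LinearMap.mem_ker,
    Module.End.coe_pow, Set.mem_ofPred_eq]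
  rfl

theorem ad_pderiv_pow_eq_zero_of_mem_Nsub {u : DerPn K n} (hu : u ∈ Nsub K n i) {j : Fin n}
    (hj : (j : ℕ) < n - 1) : (ad K _ (pderiv j) ^ (i + 1)) u = 0 :=
  (Submodule.mem_iInf _).mp ((Submodule.mem_iInf _).mp (Submodule.mem_inf.mp hu).2 j) hj

theorem apply_X_mem_restrictDegree_of_mem_Nsub [CharZero K] {u : DerPn K n}
    (hu : u ∈ Nsub K n i) (k : Fin n) : u (X k) ∈ restrictDegree (Fin n) K i := by
  rw [mem_restrictDegree]
  intro s hs j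
  by_cases hj : (j : ℕ) < n - 1
  · refine (monomial_le_degreeOf j hs).trans (pderiv_iterate_succ_eq_zero_iff.mp ?_)
    rw [← ad_pderiv_pow_apply_X, ad_pderiv_pow_eq_zero_of_mem_Nsub hu hj]
    rfl
  · rw [mem_support_notMem_vars_zero hs fun hjv => ?_]
    · exact Nat.zero_le i
    have := mem_supported.mp ((Submodule.mem_inf.mp hu).1 k).1 hjv
    simp only [Set.mem_ofPred_eq] at this
    omega

instance [CharZero K] : FiniteDimensional K (Nsub K n i) :=
  MvPolynomial.finite_of_forall_apply_X_mem_restrictDegree _ i fun _ =>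
    apply_X_mem_restrictDegree_of_mem_Nsub

theorem exists_mem_Nsub {u : DerPn K n} (hu : u ∈ U K n 1) : ∃ i, u ∈ Nsub K n i := by
  refine ⟨Finset.univ.sup fun k => (u (X k)).totalDegree, hu, Submodule.mem_iInf _ |>.mpr fun j =>
    Submodule.mem_iInf _ |>.mpr fun _ => LinearMap.mem_ker.mpr <| derivation_ext fun k => ?_⟩
  rw [ad_pderiv_pow_apply_X, pderiv_iterate_eq_zero_of_degreeOf_lt]
  · rfl
  exact Nat.lt_succ_of_le <| (degreeOf_le_totalDegree _ j).trans <|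
    Finset.le_sup (f := fun k => (u (X k)).totalDegree) (Finset.mem_univ k)

theorem map_mem_Nsub {L : LieSubalgebra K (DerPn K n)}
    (hLU : ∀ x : L, (x : DerPn K n) ∈ U K n 1) (φ : L →ₗ⁅K⁆ L)
    (hfix : ∀ j : Fin n, (j : ℕ) < n - 1 → ∃ p : L, (p : DerPn K n) = pderiv j ∧ φ p = p)
    {x : L} (hx : (x : DerPn K n) ∈ Nsub K n i) : (φ x : DerPn K n) ∈ Nsub K n i := by
  refine Submodule.mem_inf.mpr ⟨hLU (φ x), Submodule.mem_iInf _ |>.mpr fun j =>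
    Submodule.mem_iInf _ |>.mpr fun hj => ?_⟩
  obtain ⟨p, hp, hφp⟩ := hfix j hj
  have hpx : (ad K L p ^ (i + 1)) x = 0 := Subtype.ext <| by
    rw [LieSubalgebra.coe_ad_pow, hp]
    exact ad_pderiv_pow_eq_zero_of_mem_Nsub hx hj
  rw [LinearMap.mem_ker, ← hp, ← LieSubalgebra.coe_ad_pow, ← hφp, ← LieHom.map_ad_pow, hpx,
    map_zero]
  rfl

end Nsub

theorem phi_preserves_N_and_bijective_general (K : Type) [Field K] [CharZero K] (n : ℕ)
    (L : LieSubalgebra K (DerPn K n)) (hL : L.toSubmodule = U K n 1)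
    (φ : L →ₗ⁅K⁆ L) (hφ : Function.Injective φ)
    (hfix : ∀ j : Fin n, (j : ℕ) < n - 1 → ∀ x : L, (x : DerPn K n) = pderiv j →
      ((φ x : L) : DerPn K n) = pderiv j) :
    (∀ (i : ℕ) (x : L), (x : DerPn K n) ∈ Nset K n i →
      ((φ x : L) : DerPn K n) ∈ Nset K n i) ∧
    Function.Bijective φ := by
  have hLU (x : L) : (x : DerPn K n) ∈ U K n 1 := hL ▸ x.2
  have hpL (j : Fin n) : (pderiv j : DerPn K n) ∈ L := by
    rw [← LieSubalgebra.mem_toSubmodule, hL]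
    exact pderiv_mem_U K j
  have hfix' (j : Fin n) (hj : (j : ℕ) < n - 1) :
      ∃ p : L, (p : DerPn K n) = pderiv j ∧ φ p = p :=
    ⟨⟨pderiv j, hpL j⟩, rfl, Subtype.ext (hfix j hj _ rfl)⟩
  let N (i : ℕ) : Submodule K L := (Nsub K n i).comap L.toSubmodule.subtype
  have hφN (i : ℕ) : N i ≤ (N i).comap φ.toLinearMap := fun _ => map_mem_Nsub hLU φ hfix'
  have : FiniteDimensional K (LinearMap.ker L.toSubmodule.subtype) := by
    rw [Submodule.ker_subtype]
    infer_instance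
  refine ⟨fun i x hx => mem_Nsub_iff.mp (hφN i (mem_Nsub_iff.mpr hx)), hφ,
    LinearMap.surjective_of_injective_of_forall_mem_finite_invariant (f := φ.toLinearMap) hφ
      fun y => ?_⟩
  obtain ⟨i, hi⟩ := exists_mem_Nsub (hLU y)
  exact ⟨N i, inferInstance, hφN i, hi⟩

/-- if `φ : u_n → u_n` is an injective Lie algebra homomorphism fixing
`∂₁, …, ∂_{n-1}`, then `φ(Nᵢ) ⊆ Nᵢ` for all `i`, and `φ` is bijective. -/
theorem phi_preserves_N_and_bijective (K : Type) [Field K] [CharZero K] (n : ℕ) (hn : 2 ≤ n)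
    (L : LieSubalgebra K (DerPn K n)) (hL : L.toSubmodule = U K n 1)
    (φ : L →ₗ⁅K⁆ L) (hφ : Function.Injective φ)
    (hfix : ∀ j : Fin n, (j : ℕ) < n - 1 → ∀ x : L, (x : DerPn K n) = pderiv j →
      ((φ x : L) : DerPn K n) = pderiv j) :
    (∀ (i : ℕ) (x : L), (x : DerPn K n) ∈ Nset K n i →
      ((φ x : L) : DerPn K n) ∈ Nset K n i) ∧
    Function.Bijective φ :=
  phi_preserves_N_and_bijective_general K n L hL φ hφ hfix
end
end
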